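/- Let P be a lazy, irreducible, aperiodic Markov chain on a finite state space K with stationary distribution π, and let A ⊆ K be nonempty. Then the function t ↦ Ψ̄(t,Aᶜ)/t is non-decreasing on (0, π(A)]. -/

import Mathlib

open Finset MeasureTheory

noncomputable section

attribute [local instance] Classical.propDecidable

variable {K : Type*} [Fintype K]

/-- `matPow P t u v` is the `t`-step transition probability from `u` to `v`. -/
def matPow (P : K → K → ℝ) : ℕ → K → K → ℝ
  | 0 => fun u v => if u = v then 1 else 0
  | (t + 1) => fun u v => ∑ w, matPow P t u w * P w v

/-- `P` is a stochastic matrix with (strictly positive) stationary distribution `π`. -/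
structure IsMarkov (P : K → K → ℝ) (π : K → ℝ) : Prop where
  nonneg : ∀ u v, 0 ≤ P u v
  rowSum : ∀ u, ∑ v, P u v = 1
  piPos : ∀ v, 0 < π v
  piSum : ∑ v, π v = 1
  stationary : ∀ v, ∑ u, π u * P u v = π v

/-- `P` is lazy: every holding probability is at least `1/2`. -/
def IsLazy (P : K → K → ℝ) : Prop := ∀ u, (1 : ℝ) / 2 ≤ P u u

/-- irreducibility: every state can reach every other state. -/
def MCIrreducible (P : K → K → ℝ) : Prop := ∀ u v : K, ∃ t : ℕ, 0 < matPow P t u v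

/-- aperiodicity: the gcd of the return times of every state is `1`. -/
def MCAperiodic (P : K → K → ℝ) : Prop :=
  ∀ u : K, ∀ d : ℕ, (∀ t : ℕ, 0 < matPow P t u u → d ∣ t) → d ≤ 1

/-- reversibility: the detailed balance condition. -/
def IsReversible (P : K → K → ℝ) (π : K → ℝ) : Prop :=
  ∀ u v, π u * P u v = π v * P v u

/-- `π`-measure of a set. -/
def meas (π : K → ℝ) (A : Finset K) : ℝ := ∑ v ∈ A, π v

/-- the time reversal `P̄(u,v) = π(v) P(v,u) / π(u)`. -/
def rev (P : K → K → ℝ) (π : K → ℝ) (u v : K) : ℝ := π v * P v u / π u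

/-- transition probability from a point into a set, w.r.t. kernel `R`. -/
def setProb (R : K → K → ℝ) (v : K) (C : Finset K) : ℝ := ∑ c ∈ C, R v c

/-- the level set `A_u = {y : R(y,A) > u}`, w.r.t. kernel `R`. -/
def levelSet (R : K → K → ℝ) (A : Finset K) (u : ℝ) : Finset K :=
  Finset.univ.filter (fun y => u < setProb R y A)

/-- `g` is a fractional subset of `S` of measure `t`. -/
def IsFracSub (π : K → ℝ) (S : Finset K) (g : K → ℝ) (t : ℝ) : Prop :=
  (∀ v, 0 ≤ g v ∧ g v ≤ 1) ∧ (∀ v ∉ S, g v = 0) ∧ ∑ v, g v * π v = t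

/-- ergodic flow from a fractional subset `g` into `C`, w.r.t. kernel `R`. -/
def fracFlow (R : K → K → ℝ) (π : K → ℝ) (g : K → ℝ) (C : Finset K) : ℝ :=
  ∑ v, g v * π v * setProb R v C

/-- `Ψ(t, Aᶜ)` w.r.t. kernel `R`: for `t ≤ π(A)` the minimal flow into `Aᶜ` from a
fractional subset of `A` of measure `t`; for `t > π(A)` the minimal flow into `A`
from a fractional subset of `Aᶜ` of measure `1 − t`. -/
def Psi (R : K → K → ℝ) (π : K → ℝ) (A : Finset K) (t : ℝ) : ℝ :=
  if t ≤ meas π A then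
    sInf {q : ℝ | ∃ g : K → ℝ, IsFracSub π A g t ∧ q = fracFlow R π g Aᶜ}
  else
    sInf {q : ℝ | ∃ g : K → ℝ, IsFracSub π Aᶜ g (1 - t) ∧ q = fracFlow R π g A}

/-- `Ψ_big(t, Aᶜ)` w.r.t. kernel `R`: maximal flow into `Aᶜ` from a fractional
subset of `A` of measure `t`. -/
def PsiSup (R : K → K → ℝ) (π : K → ℝ) (A : Finset K) (t : ℝ) : ℝ :=
  sSup {q : ℝ | ∃ g : K → ℝ, IsFracSub π A g t ∧ q = fracFlow R π g Aᶜ}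

/-- the spread `ψ⁺(A)` (w.r.t. kernel `R`). -/
def psiPlus (R : K → K → ℝ) (π : K → ℝ) (A : Finset K) : ℝ :=
  (∫ t in (0:ℝ)..(meas π A), Psi R π A t) / (meas π A) ^ 2

/-- the quantity `ψ⁻(A)` (w.r.t. kernel `R`). -/
def psiMinus (R : K → K → ℝ) (π : K → ℝ) (A : Finset K) : ℝ :=
  (∫ t in (meas π A)..(1:ℝ), Psi R π A t) / (meas π A) ^ 2

/-- the modified spread `ψ_mod(A)` (w.r.t. kernel `R`). -/
def psiMod (R : K → K → ℝ) (π : K → ℝ) (A : Finset K) : ℝ :=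
  (∫ t in (0:ℝ)..(1:ℝ), Psi R π A t / min t (1 - t)) / meas π A

/-- the global spread `ψ_gl(A)` (w.r.t. kernel `R`). -/
def psiGl (R : K → K → ℝ) (π : K → ℝ) (A : Finset K) : ℝ :=
  (∫ t in (0:ℝ)..(1:ℝ), Psi R π A t) / (meas π A) ^ 2

/-- the quantity `ψ_big(A)` (w.r.t. kernel `R`). -/
def psiBig (R : K → K → ℝ) (π : K → ℝ) (A : Finset K) : ℝ :=
  (∫ t in (0:ℝ)..(meas π A), PsiSup R π A t) / (meas π A) ^ 2

/-- the evolving-set quantity `ψ_evo(A)`, with level sets taken w.r.t. kernel `R`. -/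
def psiEvo (R : K → K → ℝ) (π : K → ℝ) (A : Finset K) : ℝ :=
  1 - ∫ u in (0:ℝ)..(1:ℝ), Real.sqrt (meas π (levelSet R A u) / meas π A)

/-- ergodic flow `Q(B,C)`. -/
def ergFlow (P : K → K → ℝ) (π : K → ℝ) (B C : Finset K) : ℝ :=
  ∑ u ∈ B, ∑ v ∈ C, π u * P u v

/-- conductance `Φ(A)`. -/
def conductance (P : K → K → ℝ) (π : K → ℝ) (A : Finset K) : ℝ :=
  ergFlow P π A Aᶜ / meas π A

def Qone (P : K → K → ℝ) (π : K → ℝ) (C D : Finset K) : ℝ :=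
  ∑ v ∈ C, setProb P v D * π v

def Qtwo (P : K → K → ℝ) (π : K → ℝ) (C D : Finset K) : ℝ :=
  ∑ v ∈ C, Real.sqrt (setProb P v D) * π v

def Qinfty (P : K → K → ℝ) (π : K → ℝ) (C D : Finset K) : ℝ :=
  meas π (C.filter (fun v => 0 < setProb P v D))

/-- discrete gradient `h₁⁺(A)`. -/
def hOneP (P : K → K → ℝ) (π : K → ℝ) (A : Finset K) : ℝ :=
  Qone P π A Aᶜ / min (meas π A) (meas π Aᶜ)

/-- discrete gradient `h₁⁻(A)`. -/
def hOneM (P : K → K → ℝ) (π : K → ℝ) (A : Finset K) : ℝ :=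
  Qone P π Aᶜ A / min (meas π A) (meas π Aᶜ)

/-- discrete gradient `h₂⁺(A)`. -/
def hTwoP (P : K → K → ℝ) (π : K → ℝ) (A : Finset K) : ℝ :=
  Qtwo P π A Aᶜ / min (meas π A) (meas π Aᶜ)

/-- discrete gradient `h₂⁻(A)`. -/
def hTwoM (P : K → K → ℝ) (π : K → ℝ) (A : Finset K) : ℝ :=
  Qtwo P π Aᶜ A / min (meas π A) (meas π Aᶜ)

/-- discrete gradient `h_∞⁺(A)`. -/
def hInfP (P : K → K → ℝ) (π : K → ℝ) (A : Finset K) : ℝ :=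
  Qinfty P π A Aᶜ / min (meas π A) (meas π Aᶜ)

/-- discrete gradient `h_∞⁻(A)`. -/
def hInfM (P : K → K → ℝ) (π : K → ℝ) (A : Finset K) : ℝ :=
  Qinfty P π Aᶜ A / min (meas π A) (meas π Aᶜ)

/-- `p` is a probability distribution. -/
def IsDist (p : K → ℝ) : Prop := (∀ v, 0 ≤ p v) ∧ ∑ v, p v = 1

/-- the distribution after `t` steps starting from `p`. -/
def stepDist (P : K → K → ℝ) (p : K → ℝ) (t : ℕ) (v : K) : ℝ :=
  ∑ u, p u * matPow P t u v

/-- total variation distance. -/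
def tvDist (μ π : K → ℝ) : ℝ := (1 / 2) * ∑ v, |μ v - π v|

/-- chi-square distance. -/
def chi2Dist (μ π : K → ℝ) : ℝ := ∑ v, (μ v / π v - 1) ^ 2 * π v

/-- total variation mixing time `τ(ε)`: the max over initial distributions of the
least time at which total variation distance drops to `ε`. -/
def mixTV (P : K → K → ℝ) (π : K → ℝ) (ε : ℝ) : ℕ :=
  sSup {n : ℕ | ∃ p : K → ℝ, IsDist p ∧
    n = sInf {t : ℕ | tvDist (stepDist P p t) π ≤ ε}}

/-- chi-square mixing time `χ²(ε)`. -/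
def mixChi2 (P : K → K → ℝ) (π : K → ℝ) (ε : ℝ) : ℕ :=
  sSup {n : ℕ | ∃ p : K → ℝ, IsDist p ∧
    n = sInf {t : ℕ | chi2Dist (stepDist P p t) π ≤ ε}}

/-- `π₀ = min_v π(v)`. -/
def piMin (π : K → ℝ) : ℝ := sInf {r : ℝ | ∃ v : K, r = π v}

/-- `ψ⁺(x)`: worst spread over sets of measure at most `x`. -/
def psiPlusSize (R : K → K → ℝ) (π : K → ℝ) (x : ℝ) : ℝ :=
  sInf {r : ℝ | ∃ A : Finset K, 0 < meas π A ∧ meas π A ≤ x ∧ r = psiPlus R π A}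

/-- `ψ_evo(x)`: worst evolving-set quantity over sets of measure at most `x`. -/
def psiEvoSize (R : K → K → ℝ) (π : K → ℝ) (x : ℝ) : ℝ :=
  sInf {r : ℝ | ∃ A : Finset K, 0 < meas π A ∧ meas π A ≤ x ∧ r = psiEvo R π A}

/-- `ψ_big(x)`: worst `ψ_big` over sets of measure at most `x`. -/
def psiBigSize (R : K → K → ℝ) (π : K → ℝ) (x : ℝ) : ℝ :=
  sInf {r : ℝ | ∃ A : Finset K, 0 < meas π A ∧ meas π A ≤ x ∧ r = psiBig R π A}

/-- Dirichlet form. -/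
def dirichletForm (P : K → K → ℝ) (π : K → ℝ) (f : K → ℝ) : ℝ :=
  (1 / 2) * ∑ u, ∑ v, π u * P u v * (f u - f v) ^ 2

/-- variance w.r.t. `π`. -/
def varPi (π : K → ℝ) (f : K → ℝ) : ℝ :=
  ∑ v, π v * f v ^ 2 - (∑ v, π v * f v) ^ 2

/-- the spectral gap `λ`. -/
def specGap (P : K → K → ℝ) (π : K → ℝ) : ℝ :=
  sInf {r : ℝ | ∃ f : K → ℝ, (∃ u v, f u ≠ f v) ∧ r = dirichletForm P π f / varPi π f}

/-- `P_* = 1 − min_{u ∈ A} P(u, A)`. -/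
def Pstar (P : K → K → ℝ) (A : Finset K) : ℝ :=
  1 - sInf {r : ℝ | ∃ u ∈ A, r = setProb P u A}

/-- `P_min = min {P(u,v)/π(v) : u ∈ A, v ∈ Aᶜ, P(u,v) > 0}`. -/
def PminEdge (P : K → K → ℝ) (π : K → ℝ) (A : Finset K) : ℝ :=
  sInf {r : ℝ | ∃ u ∈ A, ∃ v ∈ Aᶜ, 0 < P u v ∧ r = P u v / π v}

/-- `w(t) = inf {y ∈ [0,1] : π(A_y) ≤ t}`. -/
def wfun (R : K → K → ℝ) (π : K → ℝ) (A : Finset K) (t : ℝ) : ℝ :=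
  sInf {y : ℝ | y ∈ Set.Icc (0:ℝ) 1 ∧ meas π (levelSet R A y) ≤ t}

/-!
Scaling a fractional subset `g` of `A` of measure `t` by `c ∈ [0, 1]` gives a fractional subset
of measure `c t` whose flow into `Aᶜ` is `c` times that of `g`. Hence `Ψ̄(c t, Aᶜ) ≤ c Ψ̄(t, Aᶜ)`,
which for `c = s / t` is the claimed monotonicity.
-/

open scoped Pointwise

def flowValues (R : K → K → ℝ) (π : K → ℝ) (S C : Finset K) (t : ℝ) : Set ℝ :=
  {q | ∃ g : K → ℝ, IsFracSub π S g t ∧ q = fracFlow R π g C}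

lemma Psi_eq_sInf_flowValues (R : K → K → ℝ) (π : K → ℝ) {A : Finset K} {t : ℝ}
    (ht : t ≤ meas π A) : Psi R π A t = sInf (flowValues R π A Aᶜ t) := by
  rw [Psi, if_pos ht, flowValues]

lemma fracFlow_nonneg {R : K → K → ℝ} {π : K → ℝ} (hR : ∀ u v, 0 ≤ R u v)
    (hπ : ∀ v, 0 ≤ π v) {g : K → ℝ} (hg : ∀ v, 0 ≤ g v) (C : Finset K) :
    0 ≤ fracFlow R π g C :=
  sum_nonneg fun v _ =>
    mul_nonneg (mul_nonneg (hg v) (hπ v)) (sum_nonneg fun c _ => hR v c)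

lemma bddBelow_flowValues {R : K → K → ℝ} {π : K → ℝ} (hR : ∀ u v, 0 ≤ R u v)
    (hπ : ∀ v, 0 ≤ π v) (S C : Finset K) (t : ℝ) : BddBelow (flowValues R π S C t) := by
  refine ⟨0, ?_⟩
  rintro _ ⟨g, hg, rfl⟩
  exact fracFlow_nonneg hR hπ (fun v => (hg.1 v).1) C

lemma fracFlow_smul (R : K → K → ℝ) (π : K → ℝ) (c : ℝ) (g : K → ℝ) (C : Finset K) :
    fracFlow R π (c • g) C = c * fracFlow R π g C := by
  simp only [fracFlow, mul_sum, Pi.smul_apply, smul_eq_mul, mul_assoc]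

lemma IsFracSub.smul {π : K → ℝ} {S : Finset K} {g : K → ℝ} {t c : ℝ}
    (hg : IsFracSub π S g t) (hc0 : 0 ≤ c) (hc1 : c ≤ 1) : IsFracSub π S (c • g) (c * t) := by
  obtain ⟨hg01, hgS, hgt⟩ := hg
  refine ⟨fun v => ⟨mul_nonneg hc0 (hg01 v).1, ?_⟩, fun v hv => by simp [hgS v hv], ?_⟩
  · simpa using mul_le_one₀ hc1 (hg01 v).1 (hg01 v).2
  · simp only [Pi.smul_apply, smul_eq_mul, mul_assoc, ← mul_sum, hgt]

lemma smul_flowValues_subset (R : K → K → ℝ) (π : K → ℝ) (S C : Finset K) {t c : ℝ}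
    (hc0 : 0 ≤ c) (hc1 : c ≤ 1) :
    c • flowValues R π S C t ⊆ flowValues R π S C (c * t) := by
  rintro _ ⟨_, ⟨g, hg, rfl⟩, rfl⟩
  exact ⟨c • g, hg.smul hc0 hc1, (fracFlow_smul R π c g C).symm⟩

lemma isFracSub_uniform {π : K → ℝ} {S : Finset K} {t : ℝ} (ht : 0 ≤ t)
    (hS : t ≤ meas π S) (hSpos : 0 < meas π S) :
    IsFracSub π S (fun v => if v ∈ S then t / meas π S else 0) t := by
  refine ⟨fun v => ?_, fun v hv => if_neg hv, ?_⟩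
  · dsimp only
    split_ifs
    · exact ⟨div_nonneg ht hSpos.le, (div_le_one hSpos).mpr hS⟩
    · exact ⟨le_rfl, zero_le_one⟩
  · simp only [ite_mul, zero_mul, sum_ite_mem, univ_inter, ← mul_sum]
    exact div_mul_cancel₀ t hSpos.ne'

lemma sInf_flowValues_mul_le {R : K → K → ℝ} {π : K → ℝ} (hR : ∀ u v, 0 ≤ R u v)
    (hπ : ∀ v, 0 ≤ π v) {S C : Finset K} {t c : ℝ} (hc0 : 0 ≤ c) (hc1 : c ≤ 1)
    (hne : (flowValues R π S C t).Nonempty) :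
    sInf (flowValues R π S C (c * t)) ≤ c * sInf (flowValues R π S C t) := by
  rw [← smul_eq_mul c (sInf _), ← Real.sInf_smul_of_nonneg hc0]
  exact csInf_le_csInf (bddBelow_flowValues hR hπ S C _) hne.smul_set
    (smul_flowValues_subset R π S C hc0 hc1)

theorem Psi_div_monotone_general
    (P : K → K → ℝ) (π : K → ℝ) (A : Finset K)
    (hM : IsMarkov P π) :
    ∀ s t : ℝ, 0 < s → s ≤ t → t ≤ meas π A →
      Psi (rev P π) π A s / s ≤ Psi (rev P π) π A t / t := by
  intro s t hs hst htA
  have ht : 0 < t := hs.trans_le hst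
  have hπ : ∀ v, 0 ≤ π v := fun v => (hM.piPos v).le
  have hrev : ∀ u v, 0 ≤ rev P π u v := fun u v =>
    div_nonneg (mul_nonneg (hπ v) (hM.nonneg v u)) (hπ u)
  have hne : (flowValues (rev P π) π A Aᶜ t).Nonempty :=
    ⟨_, _, isFracSub_uniform ht.le htA (ht.trans_le htA), rfl⟩
  have hscale := sInf_flowValues_mul_le hrev hπ
    (div_nonneg hs.le ht.le) ((div_le_one ht).mpr hst) hne
  rw [div_mul_cancel₀ s ht.ne'] at hscale
  rw [Psi_eq_sInf_flowValues _ _ (hst.trans htA), Psi_eq_sInf_flowValues _ _ htA,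
    div_le_div_iff₀ hs ht]
  calc sInf (flowValues (rev P π) π A Aᶜ s) * t
      ≤ s / t * sInf (flowValues (rev P π) π A Aᶜ t) * t := by gcongr
    _ = sInf (flowValues (rev P π) π A Aᶜ t) * s := by field_simp

/-- `t ↦ Ψ̄(t,Aᶜ)/t` is non-decreasing on `(0, π(A)]`. -/
theorem Psi_div_monotone
    (P : K → K → ℝ) (π : K → ℝ) (A : Finset K)
    (hM : IsMarkov P π) (hlazy : IsLazy P)
    (hirr : MCIrreducible P) (hap : MCAperiodic P)
    (hA : A.Nonempty) :
    ∀ s t : ℝ, 0 < s → s ≤ t → t ≤ meas π A →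
      Psi (rev P π) π A s / s ≤ Psi (rev P π) π A t / t :=
  Psi_div_monotone_general P π A hM
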